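/- The family of increment distributions of the process 𝒥 is consistent: for 0 < s < t < u ≤ 1, if X is 0 with probability s/t and exponential with mean t/π with probability 1 - s/t, and Y (independent of X) is 0 with probability t/u and exponential with mean u/π with probability 1 - t/u, then X + Y is 0 with probability s/u and exponential with mean u/π with probability 1 - s/u. -/

import Mathlib

open MeasureTheory ProbabilityTheory Real

/-- The increment distribution `μ_{a,b} = (a/b)·δ₀ + (1 - a/b)·Exp(π/b)` of the process `𝒥`. -/
noncomputable def incMeasure (a b : ℝ) : Measure ℝ :=
  ENNReal.ofReal (a / b) • Measure.dirac 0 +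
    ENNReal.ofReal (1 - a / b) • expMeasure (π / b)

/-!
The characteristic function of `μ_{a,b}` is
`a/b + (1 - a/b) · π / (π - i b ξ) = (π - i a ξ) / (π - i b ξ)`,
so the characteristic functions of `μ_{s,t}` and `μ_{t,u}` telescope to that of `μ_{s,u}`,
and a finite measure on `ℝ` is determined by its characteristic function.
-/

open Complex

section CharFun

variable {E : Type*} [NormedAddCommGroup E] [InnerProductSpace ℝ E] [MeasurableSpace E]
  {μ ν : Measure E}

lemma charFun_add_measure [OpensMeasurableSpace E] [IsFiniteMeasure μ] [IsFiniteMeasure ν]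
    (t : E) : charFun (μ + ν) t = charFun μ t + charFun ν t := by
  have hint : ∀ (ρ : Measure E) [IsFiniteMeasure ρ],
      Integrable (fun x ↦ cexp (inner ℝ x t * I)) ρ :=
    fun ρ _ ↦ (integrable_const (1 : ℝ)).mono (by fun_prop) (by simp)
  exact integral_add_measure (hint μ) (hint ν)

lemma charFun_smul_measure (c : ENNReal) (t : E) :
    charFun (c • μ) t = c.toReal * charFun μ t := by
  rw [charFun_apply, charFun_apply, integral_smul_measure, Complex.real_smul]

end CharFun

instance isFiniteMeasure_ofReal_smul {α : Type*} [MeasurableSpace α] (c : ℝ) (μ : Measure α)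
    [IsFiniteMeasure μ] : IsFiniteMeasure (ENNReal.ofReal c • μ) :=
  μ.smul_finite ENNReal.ofReal_ne_top

lemma ofReal_sub_ofReal_mul_I_ne_zero {r : ℝ} (hr : r ≠ 0) (x : ℝ) : (r : ℂ) - x * I ≠ 0 := by
  intro h
  simpa [hr] using congrArg Complex.re h

lemma charFun_expMeasure {r : ℝ} (hr : 0 < r) (ξ : ℝ) :
    charFun (expMeasure r) ξ = r / (r - ξ * I) := by
  have hre : (-(r : ℂ) + ξ * I).re < 0 := by simpa using hr
  have hdensity : ∀ x : ℝ, (exponentialPDF r x).toReal • cexp (ξ * x * I) =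
      (Set.Ici 0).indicator (fun x : ℝ ↦ r * cexp ((-(r : ℂ) + ξ * I) * x)) x := by
    intro x
    rcases le_or_gt 0 x with hx | hx
    · rw [Set.indicator_of_mem (Set.mem_Ici.2 hx), exponentialPDF_of_nonneg hx,
        ENNReal.toReal_ofReal (by positivity), Complex.real_smul, Complex.ofReal_mul,
        Complex.ofReal_exp, mul_assoc, ← Complex.exp_add]
      push_cast
      ring_nf
    · rw [exponentialPDF_of_neg hx, Set.indicator_of_notMem (by simpa using hx)]
      simp
  rw [charFun_apply_real, expMeasure, gammaMeasure, show gammaPDF 1 r = exponentialPDF r from rfl,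
    integral_withDensity_eq_integral_toReal_smul
      (show Measurable (exponentialPDF r) from (measurable_exponentialPDFReal r).ennreal_ofReal)
      (ae_of_all _ fun _ ↦ ENNReal.ofReal_lt_top)]
  simp_rw [hdensity]
  rw [integral_indicator measurableSet_Ici, integral_Ici_eq_integral_Ioi, integral_const_mul,
    integral_exp_mul_complex_Ioi hre, Complex.ofReal_zero, mul_zero, Complex.exp_zero,
    show -(r : ℂ) + ξ * I = -(r - ξ * I) by ring]
  field_simp [ofReal_sub_ofReal_mul_I_ne_zero hr.ne' ξ]

lemma isFiniteMeasure_incMeasure (a : ℝ) {b : ℝ} (hb : 0 < b) :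
    IsFiniteMeasure (incMeasure a b) :=
  have := isProbabilityMeasure_expMeasure (div_pos pi_pos hb)
  inferInstanceAs (IsFiniteMeasure (_ + _))

lemma charFun_incMeasure {a b : ℝ} (ha : 0 ≤ a) (hab : a ≤ b) (hb : 0 < b) (ξ : ℝ) :
    charFun (incMeasure a b) ξ = (π - a * ξ * I) / (π - b * ξ * I) := by
  have hr : 0 < π / b := div_pos pi_pos hb
  have := isProbabilityMeasure_expMeasure hr
  rw [incMeasure, charFun_add_measure, charFun_smul_measure, charFun_smul_measure,
    charFun_dirac, inner_zero_left, Complex.ofReal_zero, zero_mul, Complex.exp_zero, mul_one,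
    charFun_expMeasure hr, ENNReal.toReal_ofReal (div_nonneg ha hb.le),
    ENNReal.toReal_ofReal (sub_nonneg.2 ((div_le_one hb).2 hab))]
  have hb' : (b : ℂ) ≠ 0 := by exact_mod_cast hb.ne'
  have hden := ofReal_sub_ofReal_mul_I_ne_zero pi_ne_zero (b * ξ)
  push_cast at hden ⊢
  field_simp
  ring

theorem incMeasure_conv_consistent_general (s t u : ℝ) (hs : 0 < s) (hst : s < t) (htu : t < u) :
    Measure.conv (incMeasure s t) (incMeasure t u) = incMeasure s u := by
  have ht : 0 < t := hs.trans hst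
  have hu : 0 < u := ht.trans htu
  have := isFiniteMeasure_incMeasure s ht
  have := isFiniteMeasure_incMeasure t hu
  have := isFiniteMeasure_incMeasure s hu
  refine Measure.ext_of_charFun (funext fun ξ ↦ ?_)
  have hne : (π : ℂ) - t * ξ * I ≠ 0 := by
    simpa using ofReal_sub_ofReal_mul_I_ne_zero pi_ne_zero (t * ξ)
  rw [charFun_conv, charFun_incMeasure hs.le hst.le ht, charFun_incMeasure ht.le htu.le hu,
    charFun_incMeasure hs.le (hst.trans htu).le hu, div_mul_div_cancel₀ hne]

/-- Consistency of the increment distributions of `𝒥`: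
`μ_{s,t} ∗ μ_{t,u} = μ_{s,u}` for `0 < s < t < u ≤ 1`. -/
theorem incMeasure_conv_consistent (s t u : ℝ) (hs : 0 < s) (hst : s < t) (htu : t < u)
    (hu1 : u ≤ 1) :
    Measure.conv (incMeasure s t) (incMeasure t u) = incMeasure s u :=
  incMeasure_conv_consistent_general s t u hs hst htu
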